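/- Under the ADMM setup, the primal sequences converge to an optimal point: there exists x* ∈ ℝⁿ such that x* is a global minimizer of f(x) = G₁(x) + G₂(Ax), the sequence (x⁽ᵏ⁾) converges to x*, and the sequence (z⁽ᵏ⁾) converges to Ax*. -/

import Mathlib

open scoped BigOperators
open Matrix Filter

/-- Euclidean norm on `ℝ^n`. -/
noncomputable def eNorm2 {n : ℕ} (v : Fin n → ℝ) : ℝ := Real.sqrt (∑ i, v i ^ 2)

/-- Euclidean inner product on `ℝ^n`. -/
def edot {n : ℕ} (u v : Fin n → ℝ) : ℝ := ∑ i, u i * v i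

noncomputable def eQ {n : ℕ} (v : Fin n → ℝ) : ℝ := ∑ i, v i ^ 2

namespace ADMMAux
variable {m : ℕ}

lemma eQ_nonneg (v : Fin m → ℝ) : 0 ≤ eQ v :=
  Finset.sum_nonneg fun _ _ => sq_nonneg _

lemma eNorm2_sq (v : Fin m → ℝ) : eNorm2 v ^ 2 = eQ v :=
  Real.sq_sqrt (Finset.sum_nonneg fun _ _ => sq_nonneg _)

lemma edot_self (v : Fin m → ℝ) : edot v v = eQ v := by
  simp [edot, eQ, sq]

lemma edot_comm (u v : Fin m → ℝ) : edot u v = edot v u := by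
  simp [edot, mul_comm]

lemma edot_add_right (u v w : Fin m → ℝ) : edot u (v + w) = edot u v + edot u w := by
  simp [edot, mul_add, Finset.sum_add_distrib]

lemma edot_add_left (u v w : Fin m → ℝ) : edot (u + v) w = edot u w + edot v w := by
  simp [edot, add_mul, Finset.sum_add_distrib]

lemma edot_sub_right (u v w : Fin m → ℝ) : edot u (v - w) = edot u v - edot u w := by
  simp [edot, mul_sub, Finset.sum_sub_distrib]

lemma edot_sub_left (u v w : Fin m → ℝ) : edot (u - v) w = edot u w - edot v w := by
  simp [edot, sub_mul, Finset.sum_sub_distrib]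

lemma edot_smul_left (c : ℝ) (u v : Fin m → ℝ) : edot (c • u) v = c * edot u v := by
  simp [edot, Finset.mul_sum]; exact Finset.sum_congr rfl fun i _ => by ring

lemma edot_smul_right (c : ℝ) (u v : Fin m → ℝ) : edot u (c • v) = c * edot u v := by
  simp [edot, Finset.mul_sum]; exact Finset.sum_congr rfl fun i _ => by ring

lemma edot_neg_right (u v : Fin m → ℝ) : edot u (-v) = - edot u v := by
  simp [edot]

lemma edot_zero_right (u : Fin m → ℝ) : edot u 0 = 0 := by simp [edot]

lemma eQ_add_smul (t : ℝ) (u v : Fin m → ℝ) :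
    eQ (u + t • v) = eQ u + 2*t*edot u v + t^2 * eQ v := by
  simp only [eQ, edot, Pi.add_apply, Pi.smul_apply, smul_eq_mul, Finset.mul_sum]
  rw [← Finset.sum_add_distrib, ← Finset.sum_add_distrib]
  exact Finset.sum_congr rfl fun i _ => by ring

lemma eQ_sub (u v : Fin m → ℝ) : eQ (u - v) = eQ u - 2*edot u v + eQ v := by
  simp only [eQ, edot, Pi.sub_apply, Finset.mul_sum]
  rw [← Finset.sum_sub_distrib, ← Finset.sum_add_distrib]
  exact Finset.sum_congr rfl fun i _ => by ring

lemma sq_le_eQ (v : Fin m → ℝ) (i : Fin m) : v i ^ 2 ≤ eQ v :=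
  Finset.single_le_sum (f := fun j => v j ^ 2) (fun _ _ => sq_nonneg _) (Finset.mem_univ i)

lemma continuous_edot_pair :
    Continuous (fun p : (Fin m → ℝ) × (Fin m → ℝ) => edot p.1 p.2) := by
  unfold edot
  exact continuous_finset_sum _ fun i _ =>
    ((continuous_apply i).comp continuous_fst).mul ((continuous_apply i).comp continuous_snd)

lemma norm_le_sqrt_eQ (v : Fin m → ℝ) : ‖v‖ ≤ Real.sqrt (eQ v) := by
  rw [pi_norm_le_iff_of_nonneg (Real.sqrt_nonneg _)]
  intro i
  rw [Real.norm_eq_abs, ← Real.sqrt_sq_eq_abs]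
  exact Real.sqrt_le_sqrt (sq_le_eQ v i)

lemma le_of_forall_small (a b C : ℝ) (h : ∀ t : ℝ, 0 < t → t ≤ 1 → a ≤ b + t * C) : a ≤ b := by
  by_contra hc
  push_neg at hc
  set t : ℝ := min 1 ((a - b) / (2 * (|C| + 1))) with ht
  have habs : 0 ≤ |C| := abs_nonneg C
  have ht0 : 0 < t := by
    apply lt_min one_pos
    apply div_pos (by linarith) (by linarith)
  have ht1 : t ≤ 1 := min_le_left _ _
  have h2 : t ≤ (a - b) / (2 * (|C| + 1)) := min_le_right _ _
  have h3 : t * C ≤ t * |C| :=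
    mul_le_mul_of_nonneg_left (le_abs_self C) ht0.le
  have h4 : t * (|C| + 1) ≤ (a - b) / 2 := by
    have h5 : t * (2 * (|C| + 1)) ≤ a - b := by
      rw [← le_div_iff₀ (by linarith)]
      exact h2
    nlinarith
  have := h t ht0 ht1
  nlinarith

lemma tendsto_of_eQ_tendsto {u : ℕ → Fin m → ℝ} {l : Fin m → ℝ}
    (h : Filter.Tendsto (fun k => eQ (u k - l)) atTop (nhds 0)) :
    Filter.Tendsto u atTop (nhds l) := by
  rw [tendsto_pi_nhds]
  intro i
  have hsq : Filter.Tendsto (fun k => (u k i - l i)^2) atTop (nhds 0) :=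
    squeeze_zero (fun k => sq_nonneg _) (fun k => sq_le_eQ (u k - l) i) h
  have habs : Filter.Tendsto (fun k => |u k i - l i|) atTop (nhds 0) := by
    have h2 := (Real.continuous_sqrt.tendsto 0).comp hsq
    have h3 : ((fun x => Real.sqrt x) ∘ fun k => (u k i - l i) ^ 2)
        = fun k => |u k i - l i| := by
      funext k; simp [Function.comp, Real.sqrt_sq_eq_abs]
    rw [h3] at h2
    simpa using h2
  have hdiff : Filter.Tendsto (fun k => u k i - l i) atTop (nhds 0) :=
    (tendsto_zero_iff_abs_tendsto_zero (f := fun k : ℕ => u k i - l i) (l := atTop)).mpr habs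
  have := hdiff.add (tendsto_const_nhds (x := l i))
  simpa using this

lemma eQ_tendsto_of_tendsto {u : ℕ → Fin m → ℝ} {l : Fin m → ℝ}
    (h : Filter.Tendsto u atTop (nhds l)) :
    Filter.Tendsto (fun k => eQ (u k - l)) atTop (nhds 0) := by
  have hd : Filter.Tendsto (fun k => u k - l) atTop (nhds 0) := by
    have := h.sub (tendsto_const_nhds (x := l))
    simpa using this
  have hpair : Filter.Tendsto (fun k => ((u k - l), (u k - l))) atTop
      (nhds ((0 : Fin m → ℝ), (0 : Fin m → ℝ))) := hd.prodMk_nhds hd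
  have := (continuous_edot_pair.tendsto ((0 : Fin m → ℝ), (0 : Fin m → ℝ))).comp hpair
  have h0 : edot (0 : Fin m → ℝ) (0 : Fin m → ℝ) = 0 := by simp [edot]
  simp only [Function.comp] at this
  rw [h0] at this
  have he : ∀ k, edot (u k - l) (u k - l) = eQ (u k - l) := fun k => edot_self _
  exact this.congr fun k => he k

lemma convex_segment {G : (Fin m → ℝ) → ℝ} (hG : ConvexOn ℝ Set.univ G)
    (X y : Fin m → ℝ) {t : ℝ} (ht0 : 0 ≤ t) (ht1 : t ≤ 1) :
    G (X + t • (y - X)) ≤ (1 - t) * G X + t * G y := by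
  have h := hG.2 (Set.mem_univ X) (Set.mem_univ y) (by linarith : (0:ℝ) ≤ 1 - t) ht0 (by ring)
  have he : (1 - t) • X + t • y = X + t • (y - X) := by
    funext i; simp [Pi.smul_apply, Pi.add_apply, Pi.sub_apply]; ring
  rwa [he] at h

theorem xstep {nn : ℕ} {G₁ : (Fin nn → ℝ) → ℝ} (hG₁conv : ConvexOn ℝ Set.univ G₁)
    (A : Matrix (Fin m) (Fin nn) ℝ) (νk zk : Fin m → ℝ) {ρ : ℝ} (hρ : 0 < ρ)
    (X : Fin nn → ℝ)
    (hmin : ∀ y, G₁ X + edot νk (A.mulVec X) + (ρ/2) * eQ (A.mulVec X - zk) ≤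
      G₁ y + edot νk (A.mulVec y) + (ρ/2) * eQ (A.mulVec y - zk))
    (y : Fin nn → ℝ) :
    G₁ X - G₁ y ≤ edot (νk + ρ • (A.mulVec X - zk)) (A.mulVec y - A.mulVec X) := by
  set u := A.mulVec X - zk with hu
  set v := A.mulVec y - A.mulVec X with hv
  rw [edot_add_left, edot_smul_left]
  apply le_of_forall_small _ _ ((ρ/2) * eQ v)
  intro t ht0 ht1
  have hyt := hmin (X + t • (y - X))
  have hAyt : A.mulVec (X + t • (y - X)) = A.mulVec X + t • v := by
    rw [Matrix.mulVec_add, Matrix.mulVec_smul, Matrix.mulVec_sub]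
  have hG1yt : G₁ (X + t • (y - X)) ≤ (1 - t) * G₁ X + t * G₁ y :=
    convex_segment hG₁conv X y ht0.le ht1
  rw [hAyt] at hyt
  have hQ : eQ (A.mulVec X + t • v - zk) = eQ u + 2*t*edot u v + t^2 * eQ v := by
    have h : A.mulVec X + t • v - zk = u + t • v := by
      funext i; simp [hu, Pi.add_apply, Pi.sub_apply]; ring
    rw [h, eQ_add_smul]
  have hdot : edot νk (A.mulVec X + t • v) = edot νk (A.mulVec X) + t * edot νk v := by
    rw [edot_add_right, edot_smul_right]
  rw [hQ, hdot] at hyt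
  have key : t * (G₁ X - G₁ y) ≤
      t * (edot νk v + ρ * edot u v + t * ((ρ/2) * eQ v)) := by nlinarith
  have := le_of_mul_le_mul_left key ht0
  linarith

theorem zstep {G₂ : (Fin m → ℝ) → ℝ} (hG₂conv : ConvexOn ℝ Set.univ G₂)
    (νk AX Z : Fin m → ℝ) {ρ : ℝ} (hρ : 0 < ρ)
    (hmin : ∀ w, G₂ Z - edot νk Z + (ρ/2) * eQ (AX - Z) ≤
      G₂ w - edot νk w + (ρ/2) * eQ (AX - w))
    (w : Fin m → ℝ) :
    G₂ Z - G₂ w ≤ edot (νk + ρ • (AX - Z)) (Z - w) := by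
  set u := AX - Z with hu
  set v := Z - w with hv
  rw [edot_add_left, edot_smul_left]
  apply le_of_forall_small _ _ ((ρ/2) * eQ v)
  intro t ht0 ht1
  have hzt := hmin (Z + t • (w - Z))
  have h1 : AX - (Z + t • (w - Z)) = u + t • v := by
    funext i; simp [hu, hv, Pi.add_apply, Pi.sub_apply]; ring
  have h2 : edot νk (Z + t • (w - Z)) = edot νk Z + (-t) * edot νk v := by
    have h : Z + t • (w - Z) = Z + (-t) • v := by
      funext i; simp [hv, Pi.add_apply, Pi.sub_apply]; ring
    rw [h, edot_add_right, edot_smul_right]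
  have hG2zt : G₂ (Z + t • (w - Z)) ≤ (1 - t) * G₂ Z + t * G₂ w :=
    convex_segment hG₂conv Z w ht0.le ht1
  rw [h1, h2, eQ_add_smul] at hzt
  have key : t * (G₂ Z - G₂ w) ≤
      t * (edot νk v + ρ * edot u v + t * ((ρ/2) * eQ v)) := by nlinarith
  have := le_of_mul_le_mul_left key ht0
  linarith

theorem saddle_exists {nn : ℕ} (G₁ : (Fin nn → ℝ) → ℝ) (G₂ : (Fin m → ℝ) → ℝ)
    (hG₁conv : ConvexOn ℝ Set.univ G₁) (hG₂conv : ConvexOn ℝ Set.univ G₂)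
    (hG₂cont : Continuous G₂) (A : Matrix (Fin m) (Fin nn) ℝ)
    (x0 : Fin nn → ℝ)
    (hx0 : ∀ y, G₁ x0 + G₂ (A.mulVec x0) ≤ G₁ y + G₂ (A.mulVec y)) :
    ∃ w : Fin m → ℝ, ∀ (xx : Fin nn → ℝ) (zz : Fin m → ℝ),
      G₁ x0 + G₂ (A.mulVec x0) ≤ G₁ xx + G₂ zz + edot w (A.mulVec xx - zz) := by
  classical
  set fs := G₁ x0 + G₂ (A.mulVec x0) with hfs
  set S : Set ((Fin m → ℝ) × ℝ) :=
    {p | ∃ xx, G₁ xx + G₂ (A.mulVec xx + p.1) < p.2} with hS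
  have hSopen : IsOpen S := by
    have h : S = ⋃ xx : Fin nn → ℝ,
        {p : (Fin m → ℝ) × ℝ | G₁ xx + G₂ (A.mulVec xx + p.1) < p.2} := by
      ext p; simp [hS]
    rw [h]
    exact isOpen_iUnion fun xx => isOpen_lt
      (continuous_const.add (hG₂cont.comp (continuous_const.add continuous_fst))) continuous_snd
  have hSconv : Convex ℝ S := by
    rintro p ⟨x1, h1⟩ p' ⟨x2, h2⟩ a b ha hb hab
    rcases ha.eq_or_lt with h|hapos
    · have hb1 : b = 1 := by linarith
      subst hb1; rw [← h]; simpa using ⟨x2, h2⟩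
    rcases hb.eq_or_lt with h|hbpos
    · have ha1 : a = 1 := by linarith
      subst ha1; rw [← h]; simpa using ⟨x1, h1⟩
    refine ⟨a • x1 + b • x2, ?_⟩
    have hfst : (a • p + b • p').1 = a • p.1 + b • p'.1 := rfl
    have hsnd : (a • p + b • p').2 = a * p.2 + b * p'.2 := rfl
    have hA : A.mulVec (a • x1 + b • x2) + (a • p.1 + b • p'.1)
        = a • (A.mulVec x1 + p.1) + b • (A.mulVec x2 + p'.1) := by
      rw [Matrix.mulVec_add, Matrix.mulVec_smul, Matrix.mulVec_smul]
      funext i; simp [Pi.add_apply, Pi.smul_apply]; ring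
    have hG1 : G₁ (a • x1 + b • x2) ≤ a * G₁ x1 + b * G₁ x2 :=
      hG₁conv.2 (Set.mem_univ x1) (Set.mem_univ x2) ha hb hab
    have hG2 : G₂ (a • (A.mulVec x1 + p.1) + b • (A.mulVec x2 + p'.1))
        ≤ a * G₂ (A.mulVec x1 + p.1) + b * G₂ (A.mulVec x2 + p'.1) :=
      hG₂conv.2 (Set.mem_univ _) (Set.mem_univ _) ha hb hab
    show G₁ (a • x1 + b • x2) + G₂ (A.mulVec (a • x1 + b • x2) + (a • p + b • p').1)
        < (a • p + b • p').2
    rw [hfst, hA, hsnd]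
    nlinarith [mul_lt_mul_of_pos_left h1 hapos, mul_lt_mul_of_pos_left h2 hbpos]
  have hnotin : (((0 : Fin m → ℝ), fs)) ∉ S := by
    rintro ⟨xx, hxx⟩
    simp only [add_zero] at hxx
    have := hx0 xx
    linarith
  obtain ⟨f, hf⟩ := geometric_hahn_banach_open_point hSconv hSopen hnotin
  set c : ℝ := f ((0 : Fin m → ℝ), (1 : ℝ)) with hcdef
  have hsmulpt : ∀ t : ℝ, f ((0 : Fin m → ℝ), t) = t * c := by
    intro t
    have h1 : ((0 : Fin m → ℝ), t) = t • ((0 : Fin m → ℝ), (1 : ℝ)) := by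
      simp [Prod.smul_mk]
    rw [h1, f.map_smul, smul_eq_mul, hcdef]
  have hsplit : ∀ (u : Fin m → ℝ) (t : ℝ), f (u, t) = f (u, 0) + t * c := by
    intro u t
    have h1 : ((u, t) : (Fin m → ℝ) × ℝ) = (u, (0:ℝ)) + ((0 : Fin m → ℝ), t) := by simp
    rw [h1, map_add, hsmulpt]
  have hc : c < 0 := by
    have h1 : (((0 : Fin m → ℝ), fs + 1)) ∈ S := ⟨x0, by simp [← hfs]⟩
    have h2 := hf _ h1
    rw [hsmulpt, hsmulpt] at h2
    nlinarith
  have hkey : ∀ (xx : Fin nn → ℝ) (u : Fin m → ℝ),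
      f (u, 0) + (G₁ xx + G₂ (A.mulVec xx + u)) * c ≤ fs * c := by
    intro xx u
    apply le_of_forall_pos_le_add
    intro ε hε
    have hcn : 0 < -c := by linarith
    have hmem : ((u, G₁ xx + G₂ (A.mulVec xx + u) + ε / (-c))) ∈ S :=
      ⟨xx, by simp; positivity⟩
    have h2 := hf _ hmem
    rw [hsplit, hsmulpt] at h2
    have h3 : (G₁ xx + G₂ (A.mulVec xx + u) + ε / (-c)) * c
        = (G₁ xx + G₂ (A.mulVec xx + u)) * c - ε := by
      have h4 : ε / (-c) * c = -ε := by rw [div_neg, neg_mul, div_mul_cancel₀ ε hc.ne]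
      linear_combination h4
    rw [h3] at h2
    linarith
  set w : Fin m → ℝ := fun i => -(f (Pi.single i 1, 0)) / c with hwdef
  have hlin : ∀ v : Fin m → ℝ, f (v, 0) = ∑ i, v i * f (Pi.single i 1, 0) := by
    intro v
    have hv : ((v, (0:ℝ)) : (Fin m → ℝ) × ℝ)
        = ∑ i, v i • ((Pi.single i (1:ℝ) : Fin m → ℝ), (0:ℝ)) := by
      have h1 : ∀ i : Fin m, v i • ((Pi.single i (1:ℝ) : Fin m → ℝ), (0:ℝ))
          = ((Pi.single i (v i) : Fin m → ℝ), (0:ℝ)) := by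
        intro i
        rw [Prod.smul_mk]
        congr 1
        · funext j
          by_cases h : j = i <;> simp [Pi.single_apply, h]
        · simp
      rw [Finset.sum_congr rfl fun i _ => h1 i]
      rw [Prod.ext_iff]
      constructor
      · rw [Prod.fst_sum]; simpa using (Finset.univ_sum_single v).symm ▸ rfl
      · rw [Prod.snd_sum]; simp
    rw [hv, map_sum]
    exact Finset.sum_congr rfl fun i _ => by rw [f.map_smul, smul_eq_mul]
  have hedot : ∀ d : Fin m → ℝ, edot w d = -(f (d, 0)) / c := by
    intro d
    rw [hlin d]
    simp only [edot, hwdef]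
    have e1 : ∀ i : Fin m, -f (Pi.single i 1, 0) / c * d i
        = -(d i * f (Pi.single i 1, 0)) / c := fun i => by ring
    rw [Finset.sum_congr rfl fun i _ => e1 i, ← Finset.sum_div]
    congr 1
    rw [← Finset.sum_neg_distrib]
  refine ⟨w, ?_⟩
  intro xx zz
  have hu := hkey xx (zz - A.mulVec xx)
  have h1 : A.mulVec xx + (zz - A.mulVec xx) = zz := by funext i; simp
  rw [h1] at hu
  have h2 : edot w (A.mulVec xx - zz) = f (zz - A.mulVec xx, 0) / c := by
    rw [hedot]
    have h3 : ((A.mulVec xx - zz : Fin m → ℝ), (0:ℝ))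
        = -((zz - A.mulVec xx : Fin m → ℝ), (0:ℝ)) := by
      rw [Prod.ext_iff]; constructor <;> simp [neg_sub]
    rw [h3, f.map_neg, neg_neg]
  rw [h2]
  have h4 : fs - (G₁ xx + G₂ zz) ≤ f (zz - A.mulVec xx, 0) / c := by
    rw [le_div_iff_of_neg hc]
    nlinarith [hu]
  linarith

end ADMMAux

open ADMMAux in
set_option maxHeartbeats 1000000 in
/-- ADMM primal convergence: under the ADMM setup (convex continuous `G₁, G₂`, `AᵀA`
invertible, the set of minimizers of `f(x) = G₁(x) + G₂(Ax)` nonempty, `ρ > 0`, and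
sequences generated by the ADMM iteration), there exists a global minimizer `x*` of `f`
such that `x⁽ᵏ⁾ → x*` and `z⁽ᵏ⁾ → Ax*`. -/
theorem admm_primal_convergence
    (n q : ℕ) (hn : 0 < n) (hq : 0 < q)
    (G₁ : (Fin n → ℝ) → ℝ) (G₂ : (Fin q → ℝ) → ℝ)
    (hG₁conv : ConvexOn ℝ Set.univ G₁) (hG₁cont : Continuous G₁)
    (hG₂conv : ConvexOn ℝ Set.univ G₂) (hG₂cont : Continuous G₂)
    (A : Matrix (Fin q) (Fin n) ℝ) (hA : IsUnit (Aᵀ * A))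
    (hexists : ∃ x0 : Fin n → ℝ, ∀ y : Fin n → ℝ,
      G₁ x0 + G₂ (A.mulVec x0) ≤ G₁ y + G₂ (A.mulVec y))
    (ρ : ℝ) (hρ : 0 < ρ)
    (x : ℕ → Fin n → ℝ) (z ν : ℕ → Fin q → ℝ)
    (hx : ∀ k, ∀ y : Fin n → ℝ,
      G₁ (x (k+1)) + edot (ν k) (A.mulVec (x (k+1))) +
          (ρ/2) * eNorm2 (A.mulVec (x (k+1)) - z k) ^ 2 ≤
        G₁ y + edot (ν k) (A.mulVec y) + (ρ/2) * eNorm2 (A.mulVec y - z k) ^ 2)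
    (hz : ∀ k, ∀ w : Fin q → ℝ,
      G₂ (z (k+1)) - edot (ν k) (z (k+1)) +
          (ρ/2) * eNorm2 (A.mulVec (x (k+1)) - z (k+1)) ^ 2 ≤
        G₂ w - edot (ν k) w + (ρ/2) * eNorm2 (A.mulVec (x (k+1)) - w) ^ 2)
    (hν : ∀ k, ν (k+1) = ν k + ρ • (A.mulVec (x (k+1)) - z (k+1))) :
    ∃ xstar : Fin n → ℝ,
      (∀ y : Fin n → ℝ, G₁ xstar + G₂ (A.mulVec xstar) ≤ G₁ y + G₂ (A.mulVec y)) ∧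
      Tendsto x atTop (nhds xstar) ∧
      Tendsto z atTop (nhds (A.mulVec xstar)) := by
  classical
  -- rewrite the minimization hypotheses with eQ
  have hx' : ∀ k y, G₁ (x (k+1)) + edot (ν k) (A.mulVec (x (k+1))) +
      (ρ/2) * eQ (A.mulVec (x (k+1)) - z k) ≤
      G₁ y + edot (ν k) (A.mulVec y) + (ρ/2) * eQ (A.mulVec y - z k) := by
    intro k y
    have h := hx k y
    rwa [eNorm2_sq, eNorm2_sq] at h
  have hz' : ∀ k w, G₂ (z (k+1)) - edot (ν k) (z (k+1)) +
      (ρ/2) * eQ (A.mulVec (x (k+1)) - z (k+1)) ≤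
      G₂ w - edot (ν k) w + (ρ/2) * eQ (A.mulVec (x (k+1)) - w) := by
    intro k w
    have h := hz k w
    rwa [eNorm2_sq, eNorm2_sq] at h
  -- first-order conditions
  have hI : ∀ k y, G₁ (x (k+1)) - G₁ y ≤
      edot (ν (k+1) + ρ • (z (k+1) - z k)) (A.mulVec y - A.mulVec (x (k+1))) := by
    intro k y
    have h := xstep hG₁conv A (ν k) (z k) hρ (x (k+1)) (hx' k) y
    have he : ν k + ρ • (A.mulVec (x (k+1)) - z k) = ν (k+1) + ρ • (z (k+1) - z k) := by
      rw [hν k]; funext i; simp [Pi.add_apply, Pi.smul_apply, Pi.sub_apply]; ring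
    rwa [he] at h
  have hII : ∀ k w, G₂ (z (k+1)) - G₂ w ≤ edot (ν (k+1)) (z (k+1) - w) := by
    intro k w
    have h := zstep hG₂conv (ν k) (A.mulVec (x (k+1))) (z (k+1)) hρ (hz' k) w
    rwa [← hν k] at h
  -- monotonicity-derived inequality
  have hmono : ∀ k, 0 ≤ edot (A.mulVec (x (k+2)) - z (k+2)) (z (k+2) - z (k+1)) := by
    intro k
    have ha := hII (k+1) (z (k+1))
    have hb := hII k (z (k+2))
    have hbe : z (k+1) - z (k+2) = -(z (k+2) - z (k+1)) := by
      funext i; simp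
    rw [hbe, edot_neg_right] at hb
    have hsum : 0 ≤ edot (ν (k+2)) (z (k+2) - z (k+1)) - edot (ν (k+1)) (z (k+2) - z (k+1)) := by
      linarith
    rw [← edot_sub_left] at hsum
    have hd : ν (k+2) - ν (k+1) = ρ • (A.mulVec (x (k+2)) - z (k+2)) := by
      rw [hν (k+1)]; funext i; simp
    rw [hd, edot_smul_left] at hsum
    nlinarith
  -- key Lyapunov inequality
  have hstar : ∀ (w zs : Fin q → ℝ) (xs : Fin n → ℝ), A.mulVec xs = zs →
      (∀ xx zz, G₁ xs + G₂ zs ≤ G₁ xx + G₂ zz + edot w (A.mulVec xx - zz)) →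
      ∀ k, (eQ (ν (k+2) - w) + ρ^2 * eQ (z (k+2) - zs))
          + ρ^2 * eQ (A.mulVec (x (k+2)) - z (k+2)) + ρ^2 * eQ (z (k+2) - z (k+1))
        ≤ eQ (ν (k+1) - w) + ρ^2 * eQ (z (k+1) - zs) := by
    intro w zs xs hAxs hsad k
    set r := A.mulVec (x (k+2)) - z (k+2) with hr
    set s := z (k+2) - z (k+1) with hs
    set d := z (k+2) - zs with hd
    set a := ν (k+1) - w with hadef
    have hIk : G₁ (x (k+2)) - G₁ xs ≤
        edot (ν (k+2) + ρ • s) (A.mulVec xs - A.mulVec (x (k+2))) := hI (k+1) xs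
    have hIIk : G₂ (z (k+2)) - G₂ zs ≤ edot (ν (k+2)) d := hII (k+1) zs
    have hsadk : G₁ xs + G₂ zs ≤ G₁ (x (k+2)) + G₂ (z (k+2)) + edot w r :=
      hsad (x (k+2)) (z (k+2))
    have hmk : (0:ℝ) ≤ edot r s := hmono k
    have hrw1 : A.mulVec xs - A.mulVec (x (k+2)) = -(d + r) := by
      rw [hAxs]
      funext i
      simp only [hd, hr, Pi.sub_apply, Pi.add_apply, Pi.neg_apply]
      ring
    rw [hrw1, edot_neg_right, edot_add_left, edot_smul_left, edot_add_right,
      edot_add_right] at hIk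
    have hν2 : ν (k+2) = ν (k+1) + ρ • r := hν (k+1)
    have hP2 : edot (ν (k+2)) r = edot a r + ρ * eQ r + edot w r := by
      have h : ν (k+2) = (a + ρ • r) + w := by
        rw [hν2, hadef]
        funext i
        simp only [Pi.add_apply, Pi.sub_apply, Pi.smul_apply, smul_eq_mul]
        ring
      rw [h, edot_add_left, edot_add_left, edot_smul_left, edot_self]
    have hnn : (0:ℝ) ≤ ρ * edot s r := by
      rw [edot_comm s r]; exact mul_nonneg hρ.le hmk
    have hcombo : edot a r + ρ * eQ r + ρ * edot s d ≤ 0 := by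
      linarith [hIk, hIIk, hsadk, hP2, hnn]
    have hE1 : eQ (ν (k+2) - w) = eQ a + 2*ρ*edot a r + ρ^2 * eQ r := by
      have h : ν (k+2) - w = a + ρ • r := by
        rw [hν2, hadef]
        funext i
        simp only [Pi.add_apply, Pi.sub_apply, Pi.smul_apply, smul_eq_mul]
        ring
      rw [h, eQ_add_smul]
    have hE2 : eQ (z (k+1) - zs) = eQ d - 2*edot d s + eQ s := by
      have h : z (k+1) - zs = d - s := by
        funext i
        simp only [hd, hs, Pi.sub_apply]
        ring
      rw [h, eQ_sub]
    rw [hE1, hE2]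
    have hds : edot d s = edot s d := edot_comm d s
    nlinarith [mul_nonpos_of_nonneg_of_nonpos hρ.le hcombo, hds]
  -- get a saddle point from Hahn-Banach
  obtain ⟨x0, hx0⟩ := hexists
  obtain ⟨w0, hw0⟩ := saddle_exists G₁ G₂ hG₁conv hG₂conv hG₂cont A x0 hx0
  set zs0 := A.mulVec x0 with hzs0
  set V : ℕ → ℝ := fun k => eQ (ν k - w0) + ρ^2 * eQ (z k - zs0) with hVdef
  have hstar0 := hstar w0 zs0 x0 rfl hw0
  set c : ℕ → ℝ := fun k => ρ^2 * eQ (A.mulVec (x (k+2)) - z (k+2))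
      + ρ^2 * eQ (z (k+2) - z (k+1)) with hcdef
  have hcnon : ∀ k, 0 ≤ c k := fun k =>
    add_nonneg (mul_nonneg (sq_nonneg ρ) (eQ_nonneg _)) (mul_nonneg (sq_nonneg ρ) (eQ_nonneg _))
  have hVnon : ∀ k, 0 ≤ V k := fun k =>
    add_nonneg (eQ_nonneg _) (mul_nonneg (sq_nonneg ρ) (eQ_nonneg _))
  have hstep : ∀ k, V (k+2) + c k ≤ V (k+1) := by
    intro k
    have := hstar0 k
    simp only [hVdef, hcdef]
    linarith
  have hpartial : ∀ N, (∑ i ∈ Finset.range N, c i) + V (N+1) ≤ V 1 := by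
    intro N
    induction N with
    | zero => simp
    | succ N ih =>
      rw [Finset.sum_range_succ]
      have := hstep N
      linarith
  have hsummable : Summable c :=
    summable_of_sum_range_le (c := V 1) hcnon fun N => by
      have := hpartial N
      have := hVnon (N+1)
      linarith
  have hczero : Tendsto c atTop (nhds 0) := hsummable.tendsto_atTop_zero
  -- residuals tend to zero
  have hrQ : Tendsto (fun k => eQ (A.mulVec (x (k+2)) - z (k+2))) atTop (nhds 0) := by
    have h1 : ∀ k, ρ^2 * eQ (A.mulVec (x (k+2)) - z (k+2)) ≤ c k := fun k => by
      simp only [hcdef]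
      nlinarith [eQ_nonneg (z (k+2) - z (k+1)), sq_nonneg ρ]
    have h2 : Tendsto (fun k => ρ^2 * eQ (A.mulVec (x (k+2)) - z (k+2))) atTop (nhds 0) :=
      squeeze_zero (fun k => mul_nonneg (sq_nonneg ρ) (eQ_nonneg _)) h1 hczero
    have h3 := h2.const_mul ((ρ^2)⁻¹)
    simp only [mul_zero] at h3
    refine h3.congr fun k => ?_
    have hρ2 : (ρ:ℝ)^2 ≠ 0 := by positivity
    field_simp
  have hsQ : Tendsto (fun k => eQ (z (k+2) - z (k+1))) atTop (nhds 0) := by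
    have h1 : ∀ k, ρ^2 * eQ (z (k+2) - z (k+1)) ≤ c k := fun k => by
      simp only [hcdef]
      nlinarith [eQ_nonneg (A.mulVec (x (k+2)) - z (k+2)), sq_nonneg ρ]
    have h2 : Tendsto (fun k => ρ^2 * eQ (z (k+2) - z (k+1))) atTop (nhds 0) :=
      squeeze_zero (fun k => mul_nonneg (sq_nonneg ρ) (eQ_nonneg _)) h1 hczero
    have h3 := h2.const_mul ((ρ^2)⁻¹)
    simp only [mul_zero] at h3
    refine h3.congr fun k => ?_
    have hρ2 : (ρ:ℝ)^2 ≠ 0 := by positivity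
    field_simp
  -- vector residuals
  have hrvec : Tendsto (fun k => A.mulVec (x k) - z k) atTop (nhds 0) := by
    rw [← tendsto_add_atTop_iff_nat 2]
    apply tendsto_of_eQ_tendsto
    simpa using hrQ
  have hsvec : Tendsto (fun k => z (k+1) - z k) atTop (nhds 0) := by
    rw [← tendsto_add_atTop_iff_nat 1]
    apply tendsto_of_eQ_tendsto
    simpa using hsQ
  -- boundedness
  have hbound : ∀ k, V (k+1) ≤ V 1 := by
    intro k
    induction k with
    | zero => exact le_refl _
    | succ k ih =>
      have := hstep k
      have := hcnon k
      linarith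
  -- coordinate bounds and compactness
  have hρ2pos : (0:ℝ) < ρ^2 := by positivity
  set R : ℝ := ‖zs0‖ + Real.sqrt (V 1 / ρ^2) + ‖w0‖ + Real.sqrt (V 1) with hR
  have hmem : ∀ k, ((z (k+1), ν (k+1)) : (Fin q → ℝ) × (Fin q → ℝ)) ∈
      Metric.closedBall (0 : (Fin q → ℝ) × (Fin q → ℝ)) R := by
    intro k
    have h1 : eQ (z (k+1) - zs0) ≤ V 1 / ρ^2 := by
      have ha : ρ^2 * eQ (z (k+1) - zs0) ≤ V (k+1) := by
        simp only [hVdef]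
        linarith [eQ_nonneg (ν (k+1) - w0)]
      rw [le_div_iff₀ hρ2pos]
      linarith [hbound k, ha]
    have h2 : eQ (ν (k+1) - w0) ≤ V 1 := by
      have ha : eQ (ν (k+1) - w0) ≤ V (k+1) := by
        simp only [hVdef]
        linarith [mul_nonneg (sq_nonneg ρ) (eQ_nonneg (z (k+1) - zs0))]
      linarith [hbound k, ha]
    have hz1 : ‖z (k+1)‖ ≤ ‖zs0‖ + Real.sqrt (V 1 / ρ^2) := by
      have ha : ‖z (k+1)‖ ≤ ‖z (k+1) - zs0‖ + ‖zs0‖ := by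
        have := norm_add_le (z (k+1) - zs0) zs0
        simpa using this
      have h3 : ‖z (k+1) - zs0‖ ≤ Real.sqrt (V 1 / ρ^2) :=
        le_trans (norm_le_sqrt_eQ _) (Real.sqrt_le_sqrt h1)
      linarith
    have hν1 : ‖ν (k+1)‖ ≤ ‖w0‖ + Real.sqrt (V 1) := by
      have ha : ‖ν (k+1)‖ ≤ ‖ν (k+1) - w0‖ + ‖w0‖ := by
        have := norm_add_le (ν (k+1) - w0) w0
        simpa using this
      have h3 : ‖ν (k+1) - w0‖ ≤ Real.sqrt (V 1) :=
        le_trans (norm_le_sqrt_eQ _) (Real.sqrt_le_sqrt h2)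
      linarith
    rw [Metric.mem_closedBall]
    simp only [Prod.dist_eq, Prod.fst_zero, Prod.snd_zero, dist_zero_right]
    have hs1 : (0:ℝ) ≤ Real.sqrt (V 1) := Real.sqrt_nonneg _
    have hs2 : (0:ℝ) ≤ Real.sqrt (V 1 / ρ^2) := Real.sqrt_nonneg _
    have hn1 : (0:ℝ) ≤ ‖zs0‖ := norm_nonneg _
    have hn2 : (0:ℝ) ≤ ‖w0‖ := norm_nonneg _
    apply max_le
    · simp only [hR]; linarith
    · simp only [hR]; linarith
  obtain ⟨L, hL, φ, hφmono, hφtend⟩ :=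
    (isCompact_closedBall (0 : (Fin q → ℝ) × (Fin q → ℝ)) R).tendsto_subseq hmem
  set zinf := L.1 with hzinf
  set νinf := L.2 with hνinf
  have hz1t : Tendsto (fun j => z (φ j + 1)) atTop (nhds zinf) :=
    (continuous_fst.tendsto L).comp hφtend
  have hν1t : Tendsto (fun j => ν (φ j + 1)) atTop (nhds νinf) :=
    (continuous_snd.tendsto L).comp hφtend
  have hφ1 : Tendsto (fun j => φ j + 1) atTop atTop :=
    tendsto_atTop_mono (fun j => Nat.le_add_right (φ j) 1) hφmono.tendsto_atTop
  have hφ2 : Tendsto (fun j => φ j + 2) atTop atTop :=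
    tendsto_atTop_mono (fun j => Nat.le_add_right (φ j) 2) hφmono.tendsto_atTop
  have hz2t : Tendsto (fun j => z (φ j + 2)) atTop (nhds zinf) := by
    have h1 : Tendsto (fun j => z (φ j + 1 + 1) - z (φ j + 1)) atTop (nhds 0) :=
      hsvec.comp hφ1
    have h2 := hz1t.add h1
    simp only [add_zero] at h2
    refine h2.congr fun j => ?_
    funext i; simp
  have hrφ2 : Tendsto (fun j => A.mulVec (x (φ j + 2)) - z (φ j + 2)) atTop (nhds 0) :=
    hrvec.comp hφ2
  have hAx2 : Tendsto (fun j => A.mulVec (x (φ j + 2))) atTop (nhds zinf) := by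
    have h2 := hz2t.add hrφ2
    simp only [add_zero] at h2
    refine h2.congr fun j => ?_
    funext i; simp
  have hν2t : Tendsto (fun j => ν (φ j + 2)) atTop (nhds νinf) := by
    have h1 := hrφ2.const_smul ρ
    rw [smul_zero] at h1
    have h2 := hν1t.add h1
    simp only [add_zero] at h2
    refine h2.congr fun j => ?_
    exact (hν (φ j + 1)).symm
  -- the left-inverse map P of A
  have hdet : IsUnit (Aᵀ * A).det := (Matrix.isUnit_iff_isUnit_det _).mp hA
  set P : (Fin q → ℝ) → (Fin n → ℝ) := fun v => (Aᵀ * A)⁻¹.mulVec (Aᵀ.mulVec v) with hPdef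
  have hPA : ∀ v : Fin n → ℝ, P (A.mulVec v) = v := by
    intro v
    simp only [hPdef]
    rw [Matrix.mulVec_mulVec, Matrix.mulVec_mulVec, Matrix.mul_assoc,
      Matrix.nonsing_inv_mul _ hdet, Matrix.one_mulVec]
  have hcontA : Continuous (fun v : Fin n → ℝ => A.mulVec v) := by
    have h := (Matrix.mulVecLin A).continuous_of_finiteDimensional
    have he : (fun v : Fin n → ℝ => A.mulVec v) = ⇑(Matrix.mulVecLin A) := by
      funext v; simp [Matrix.mulVecLin_apply]
    rw [he]; exact h
  have hcontP : Continuous P := by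
    have h1 := (Matrix.mulVecLin (Aᵀ * A)⁻¹).continuous_of_finiteDimensional
    have h2 := (Matrix.mulVecLin Aᵀ).continuous_of_finiteDimensional
    have he : P = ⇑(Matrix.mulVecLin (Aᵀ * A)⁻¹) ∘ ⇑(Matrix.mulVecLin Aᵀ) := by
      funext v
      simp only [hPdef, Function.comp_apply, Matrix.mulVecLin_apply]
    rw [he]; exact h1.comp h2
  set xstar := P zinf with hxstardef
  have hx2t : Tendsto (fun j => x (φ j + 2)) atTop (nhds xstar) := by
    have h1 := (hcontP.tendsto zinf).comp hAx2
    refine h1.congr fun j => hPA (x (φ j + 2))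
  have hAxstar : A.mulVec xstar = zinf :=
    tendsto_nhds_unique ((hcontA.tendsto xstar).comp hx2t) hAx2
  -- limit inequalities
  have hIinf : ∀ y, G₁ xstar - G₁ y ≤ edot νinf (A.mulVec y - zinf) := by
    intro y
    have hle : ∀ j, G₁ (x (φ j + 2)) - G₁ y ≤
        edot (ν (φ j + 2) + ρ • (z (φ j + 2) - z (φ j + 1)))
          (A.mulVec y - A.mulVec (x (φ j + 2))) := fun j => hI (φ j + 1) y
    have hL1 : Tendsto (fun j => G₁ (x (φ j + 2)) - G₁ y) atTop (nhds (G₁ xstar - G₁ y)) :=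
      ((hG₁cont.tendsto xstar).comp hx2t).sub tendsto_const_nhds
    have hsφ : Tendsto (fun j => z (φ j + 1 + 1) - z (φ j + 1)) atTop (nhds 0) :=
      hsvec.comp hφ1
    have hv1 : Tendsto (fun j => ν (φ j + 2) + ρ • (z (φ j + 2) - z (φ j + 1))) atTop
        (nhds νinf) := by
      have h1 := hsφ.const_smul ρ
      rw [smul_zero] at h1
      have h2 := hν2t.add h1
      simpa using h2
    have hv2 : Tendsto (fun j => A.mulVec y - A.mulVec (x (φ j + 2))) atTop
        (nhds (A.mulVec y - zinf)) := tendsto_const_nhds.sub hAx2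
    have hL2 : Tendsto (fun j => edot (ν (φ j + 2) + ρ • (z (φ j + 2) - z (φ j + 1)))
        (A.mulVec y - A.mulVec (x (φ j + 2)))) atTop
        (nhds (edot νinf (A.mulVec y - zinf))) :=
      (continuous_edot_pair.tendsto _).comp (hv1.prodMk_nhds hv2)
    exact le_of_tendsto_of_tendsto' hL1 hL2 hle
  have hIIinf : ∀ ww, G₂ zinf - G₂ ww ≤ edot νinf (zinf - ww) := by
    intro ww
    have hle : ∀ j, G₂ (z (φ j + 2)) - G₂ ww ≤ edot (ν (φ j + 2)) (z (φ j + 2) - ww) :=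
      fun j => hII (φ j + 1) ww
    have hL1 : Tendsto (fun j => G₂ (z (φ j + 2)) - G₂ ww) atTop (nhds (G₂ zinf - G₂ ww)) :=
      ((hG₂cont.tendsto zinf).comp hz2t).sub tendsto_const_nhds
    have hL2 : Tendsto (fun j => edot (ν (φ j + 2)) (z (φ j + 2) - ww)) atTop
        (nhds (edot νinf (zinf - ww))) :=
      (continuous_edot_pair.tendsto _).comp (hν2t.prodMk_nhds (hz2t.sub tendsto_const_nhds))
    exact le_of_tendsto_of_tendsto' hL1 hL2 hle
  -- optimality of xstar
  have hminstar : ∀ y, G₁ xstar + G₂ (A.mulVec xstar) ≤ G₁ y + G₂ (A.mulVec y) := by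
    intro y
    have h1 := hIinf y
    have h2 := hIIinf (A.mulVec y)
    have h3 : edot νinf (zinf - A.mulVec y) = - edot νinf (A.mulVec y - zinf) := by
      rw [show zinf - A.mulVec y = -(A.mulVec y - zinf) by funext i; simp, edot_neg_right]
    rw [hAxstar]
    linarith
  -- saddle inequality for (xstar, νinf)
  have hsadstar : ∀ xx zz, G₁ xstar + G₂ zinf ≤ G₁ xx + G₂ zz +
      edot νinf (A.mulVec xx - zz) := by
    intro xx zz
    have h1 := hIinf xx
    have h2 := hIIinf zz
    have h3 : edot νinf (A.mulVec xx - zinf) + edot νinf (zinf - zz)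
        = edot νinf (A.mulVec xx - zz) := by
      rw [← edot_add_right]
      congr 1
      funext i; simp
    linarith
  have hstar2 := hstar νinf zinf xstar hAxstar hsadstar
  set W : ℕ → ℝ := fun k => eQ (ν (k+1) - νinf) + ρ^2 * eQ (z (k+1) - zinf) with hW
  have hWanti : Antitone W := antitone_nat_of_succ_le fun k => by
    have h0 := hstar2 k
    have h1 := mul_nonneg (sq_nonneg ρ) (eQ_nonneg (A.mulVec (x (k+2)) - z (k+2)))
    have h2 := mul_nonneg (sq_nonneg ρ) (eQ_nonneg (z (k+2) - z (k+1)))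
    simp only [hW]
    linarith
  have hWbdd : BddBelow (Set.range W) := by
    refine ⟨0, ?_⟩
    rintro y ⟨k, rfl⟩
    exact add_nonneg (eQ_nonneg _) (mul_nonneg (sq_nonneg ρ) (eQ_nonneg _))
  have hWinf := tendsto_atTop_ciInf hWanti hWbdd
  have hWsub : Tendsto (fun j => W (φ j)) atTop (nhds 0) := by
    have h1 : Tendsto (fun j => eQ (ν (φ j + 1) - νinf)) atTop (nhds 0) :=
      eQ_tendsto_of_tendsto hν1t
    have h2 : Tendsto (fun j => eQ (z (φ j + 1) - zinf)) atTop (nhds 0) :=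
      eQ_tendsto_of_tendsto hz1t
    have h3 := h1.add (h2.const_mul (ρ^2))
    simp only [add_zero, mul_zero] at h3
    exact h3.congr fun j => by simp only [hW]
  have hiWzero : (⨅ i, W i) = 0 :=
    tendsto_nhds_unique (hWinf.comp hφmono.tendsto_atTop) hWsub
  rw [hiWzero] at hWinf
  -- z convergence
  have hzQ : Tendsto (fun k => eQ (z (k+1) - zinf)) atTop (nhds 0) := by
    have h1 : ∀ k, ρ^2 * eQ (z (k+1) - zinf) ≤ W k := fun k => by
      simp only [hW]
      nlinarith [eQ_nonneg (ν (k+1) - νinf)]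
    have h2 : Tendsto (fun k => ρ^2 * eQ (z (k+1) - zinf)) atTop (nhds 0) :=
      squeeze_zero (fun k => mul_nonneg (sq_nonneg ρ) (eQ_nonneg _)) h1 hWinf
    have h3 := h2.const_mul ((ρ^2)⁻¹)
    simp only [mul_zero] at h3
    refine h3.congr fun k => ?_
    have hρ2 : (ρ:ℝ)^2 ≠ 0 := by positivity
    field_simp
  have hztend : Tendsto z atTop (nhds zinf) := by
    rw [← tendsto_add_atTop_iff_nat 1]
    exact tendsto_of_eQ_tendsto hzQ
  -- x convergence
  have hAxtend : Tendsto (fun k => A.mulVec (x k)) atTop (nhds zinf) := by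
    have h2 := hztend.add hrvec
    simp only [add_zero] at h2
    refine h2.congr fun k => ?_
    funext i; simp
  have hxtend : Tendsto x atTop (nhds xstar) := by
    have h1 := (hcontP.tendsto zinf).comp hAxtend
    exact h1.congr fun k => hPA (x k)
  exact ⟨xstar, hminstar, hxtend, by rw [hAxstar]; exact hztend⟩
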